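/- Let G = (V,E) be a finite, connected, undirected graph with no self-loops, V = {1,…,N}, with edge weights ω_ij, ω̃_ij > 0, let β > 0, α ∈ ℝ, 𝕍 ∈ ℝ^N, 𝕎 symmetric, and let σ ∈ ℝ^N with H_1(ρ,S) = ∑_{i=1}^N σ_i ρ_i. Then on P_o(G) × ℝ^N one has the explicit Poisson bracket identities {H_0, H_1}(ρ,S) = −⟨∇_G σ, ∇_G S⟩_{θ(ρ)} and {H_1, {H_0, H_1}}(ρ,S) = −⟨∇_G σ, ∇_G σ⟩_{θ(ρ)}, and there exist constants c₁, C₁ > 0 such that |{H_0,H_1}(ρ,S)| + |{H_1,{H_0,H_1}}(ρ,S)| ≤ c₁ H_0(ρ,S) + C₁ for all (ρ,S) ∈ P_o(G) × ℝ^N. (This verifies the sufficient condition for global well-posedness for the nonlinear and logarithmic Schrödinger equations on G with common-noise potential σ.) -/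

import Mathlib

open scoped BigOperators

noncomputable section

/-- Density-dependent edge weight `θ_ij(ρ) = (ρ_i + ρ_j)/2`. -/
def thetaA {N : ℕ} (ρ : Fin N → ℝ) (i j : Fin N) : ℝ := (ρ i + ρ j) / 2

/-- Kinetic energy `K(ρ,S) = (1/4) ∑_{(i,j)∈E} ω_ij (S_i - S_j)² θ_ij(ρ)`. -/
def kinE {N : ℕ} (E : Fin N → Fin N → Prop) [DecidableRel E]
    (ω : Fin N → Fin N → ℝ) (ρ S : Fin N → ℝ) : ℝ :=
  (1 / 4) * ∑ i, ∑ j, (if E i j then ω i j * (S i - S j) ^ 2 * thetaA ρ i j else 0)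

/-- Discrete Fisher information
`I(ρ) = (1/2) ∑_i ∑_{j∈N(i)} ω̃_ij (log ρ_i - log ρ_j)(ρ_i - ρ_j)`. -/
def fisherI {N : ℕ} (E : Fin N → Fin N → Prop) [DecidableRel E]
    (ωt : Fin N → Fin N → ℝ) (ρ : Fin N → ℝ) : ℝ :=
  (1 / 2) * ∑ i, ∑ j,
    (if E i j then ωt i j * (Real.log (ρ i) - Real.log (ρ j)) * (ρ i - ρ j) else 0)

/-- Linear potential `V(ρ) = ∑_i 𝕍_i ρ_i`. -/
def potV {N : ℕ} (V : Fin N → ℝ) (ρ : Fin N → ℝ) : ℝ := ∑ i, V i * ρ i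

/-- Interaction potential `W(ρ) = (1/2) ∑_{i,j} 𝕎_ij ρ_i ρ_j`. -/
def potW {N : ℕ} (W : Fin N → Fin N → ℝ) (ρ : Fin N → ℝ) : ℝ :=
  (1 / 2) * ∑ i, ∑ j, W i j * ρ i * ρ j

/-- Entropy `L_ent(ρ) = ∑_i (ρ_i log ρ_i - ρ_i)`. -/
def entL {N : ℕ} (ρ : Fin N → ℝ) : ℝ := ∑ i, (ρ i * Real.log (ρ i) - ρ i)

/-- The dominated energy `H_0(ρ,S) = K(ρ,S) + β I(ρ) + V(ρ) + W(ρ) - α L_ent(ρ)`. -/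
def H0 {N : ℕ} (E : Fin N → Fin N → Prop) [DecidableRel E]
    (ω ωt : Fin N → Fin N → ℝ) (β α : ℝ) (V : Fin N → ℝ) (W : Fin N → Fin N → ℝ)
    (ρ S : Fin N → ℝ) : ℝ :=
  kinE E ω ρ S + β * fisherI E ωt ρ + potV V ρ + potW W ρ - α * entL ρ

/-- Discrete gradient `(∇_G S)_ij = S_i - S_j` on edges, `0` otherwise. -/
def gradG {N : ℕ} (E : Fin N → Fin N → Prop) [DecidableRel E] (S : Fin N → ℝ)
    (i j : Fin N) : ℝ :=
  if E i j then S i - S j else 0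

/-- Inner product of vector fields `⟨u,v⟩_{θ(ρ)} = (1/2) ∑_{(i,j)∈E} ω_ij u_ij v_ij θ_ij(ρ)`. -/
def innerTheta {N : ℕ} (E : Fin N → Fin N → Prop) [DecidableRel E]
    (ω : Fin N → Fin N → ℝ) (ρ : Fin N → ℝ) (u v : Fin N → Fin N → ℝ) : ℝ :=
  (1 / 2) * ∑ i, ∑ j, (if E i j then ω i j * u i j * v i j * thetaA ρ i j else 0)

/-- Poisson bracket `{F,G}(ρ,S) = ∑_i (∂F/∂ρ_i ∂G/∂S_i − ∂F/∂S_i ∂G/∂ρ_i)`,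
with partial derivatives realized by Fréchet derivatives in the coordinate
directions. -/
def pbracket {N : ℕ} (F G : (Fin N → ℝ) → (Fin N → ℝ) → ℝ) (ρ S : Fin N → ℝ) : ℝ :=
  ∑ i,
    ((fderiv ℝ (fun r => F r S) ρ) (Pi.single i 1) *
        (fderiv ℝ (fun s => G ρ s) S) (Pi.single i 1) -
      (fderiv ℝ (fun s => F ρ s) S) (Pi.single i 1) *
        (fderiv ℝ (fun r => G r S) ρ) (Pi.single i 1))

/-- The perturbation Hamiltonian `H_1(ρ,S) = ∑_i σ_i ρ_i` coming from a common-noise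
potential `σ`. -/
def H1 {N : ℕ} (σ : Fin N → ℝ) (ρ : Fin N → ℝ) (_S : Fin N → ℝ) : ℝ := ∑ i, σ i * ρ i


/-! ### Auxiliary lemmas -/

section Aux

lemma single_eq_smul' {N : ℕ} (k : Fin N) (c : ℝ) :
    Pi.single (M := fun _ => ℝ) k c = c • Pi.single (M := fun _ => ℝ) k 1 := by
  ext j
  by_cases h : j = k <;> simp [Pi.single_apply, h]

lemma sum_single_mul_clm' {N : ℕ} (L : (Fin N → ℝ) →L[ℝ] ℝ) (c : Fin N → ℝ) :
    ∑ k, c k * L (Pi.single k 1) = L c := by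
  have h : ∀ k : Fin N, c k * L (Pi.single k 1) = L (Pi.single k (c k)) := by
    intro k
    rw [single_eq_smul' k (c k), map_smul, smul_eq_mul]
  simp_rw [h, ← map_sum]
  congr 1
  exact Finset.univ_sum_single c

lemma sum_single_fderiv {N : ℕ} {f : (Fin N → ℝ) → ℝ} {L : (Fin N → ℝ) →L[ℝ] ℝ}
    {x : Fin N → ℝ} (h : HasFDerivAt f L x) (c : Fin N → ℝ) :
    ∑ k, c k * (fderiv ℝ f x) (Pi.single k 1) = L c := by
  rw [h.fderiv]; exact sum_single_mul_clm' L c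

/-- The explicit derivative of the kinetic energy in the `S` variable. -/
lemma kin_hasFDerivAt {N : ℕ} (E : Fin N → Fin N → Prop) [DecidableRel E]
    (ω : Fin N → Fin N → ℝ) (ρ S : Fin N → ℝ) :
    HasFDerivAt (fun s => kinE E ω ρ s)
      ((1/4 : ℝ) • ∑ i, ∑ j, (if E i j then
        thetaA ρ i j • ((ω i j) •
          ((S i - S j) • ((ContinuousLinearMap.proj i : (Fin N → ℝ) →L[ℝ] ℝ) - ContinuousLinearMap.proj j)
          + (S i - S j) • ((ContinuousLinearMap.proj i : (Fin N → ℝ) →L[ℝ] ℝ) - ContinuousLinearMap.proj j)))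
        else (0 : (Fin N → ℝ) →L[ℝ] ℝ))) S := by
  have hterm : ∀ i j : Fin N,
      HasFDerivAt (fun s : Fin N → ℝ => if E i j then ω i j * (s i - s j) ^ 2 * thetaA ρ i j else 0)
        (if E i j then
          thetaA ρ i j • ((ω i j) •
            ((S i - S j) • ((ContinuousLinearMap.proj i : (Fin N → ℝ) →L[ℝ] ℝ) - ContinuousLinearMap.proj j)
            + (S i - S j) • ((ContinuousLinearMap.proj i : (Fin N → ℝ) →L[ℝ] ℝ) - ContinuousLinearMap.proj j)))
          else (0 : (Fin N → ℝ) →L[ℝ] ℝ)) S := by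
    intro i j
    by_cases h : E i j
    · simp only [if_pos h, pow_two]
      have hd : HasFDerivAt (fun s : Fin N → ℝ => s i - s j)
          ((ContinuousLinearMap.proj i : (Fin N → ℝ) →L[ℝ] ℝ) - ContinuousLinearMap.proj j) S :=
        (hasFDerivAt_apply i S).sub (hasFDerivAt_apply j S)
      exact (((hd.mul hd).const_mul (ω i j)).mul_const (thetaA ρ i j))
    · simp only [if_neg h]
      exact hasFDerivAt_const 0 S
  exact (HasFDerivAt.fun_sum (fun i _ => HasFDerivAt.fun_sum (fun j _ => hterm i j))).const_mul (1/4 : ℝ)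

lemma kinL_apply {N : ℕ} (E : Fin N → Fin N → Prop) [DecidableRel E]
    (ω : Fin N → Fin N → ℝ) (ρ S c : Fin N → ℝ) :
    ((1/4 : ℝ) • ∑ i, ∑ j, (if E i j then
        thetaA ρ i j • ((ω i j) •
          ((S i - S j) • ((ContinuousLinearMap.proj i : (Fin N → ℝ) →L[ℝ] ℝ) - ContinuousLinearMap.proj j)
          + (S i - S j) • ((ContinuousLinearMap.proj i : (Fin N → ℝ) →L[ℝ] ℝ) - ContinuousLinearMap.proj j)))
        else (0 : (Fin N → ℝ) →L[ℝ] ℝ))) c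
    = (1/2) * ∑ i, ∑ j, (if E i j then ω i j * (S i - S j) * (c i - c j) * thetaA ρ i j else 0) := by
  have key : ∀ i j : Fin N,
      ((if E i j then
        thetaA ρ i j • ((ω i j) •
          ((S i - S j) • ((ContinuousLinearMap.proj i : (Fin N → ℝ) →L[ℝ] ℝ) - ContinuousLinearMap.proj j)
          + (S i - S j) • ((ContinuousLinearMap.proj i : (Fin N → ℝ) →L[ℝ] ℝ) - ContinuousLinearMap.proj j)))
        else (0 : (Fin N → ℝ) →L[ℝ] ℝ)) : (Fin N → ℝ) →L[ℝ] ℝ) c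
      = 2 * (if E i j then ω i j * (S i - S j) * (c i - c j) * thetaA ρ i j else 0) := by
    intro i j
    by_cases h : E i j
    · simp only [if_pos h, ContinuousLinearMap.smul_apply, ContinuousLinearMap.add_apply,
        ContinuousLinearMap.sub_apply, ContinuousLinearMap.proj_apply, smul_eq_mul]
      ring
    · simp [h]
  simp only [ContinuousLinearMap.smul_apply, ContinuousLinearMap.sum_apply, smul_eq_mul]
  simp_rw [key, ← Finset.mul_sum]
  ring

/-- `H0` viewed as a function of `S` has the same derivative as `kinE`. -/
lemma H0S_hasFDerivAt {N : ℕ} (E : Fin N → Fin N → Prop) [DecidableRel E]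
    (ω ωt : Fin N → Fin N → ℝ) (β α : ℝ) (V : Fin N → ℝ) (W : Fin N → Fin N → ℝ)
    (ρ S : Fin N → ℝ) :
    HasFDerivAt (fun s => H0 E ω ωt β α V W ρ s)
      ((1/4 : ℝ) • ∑ i, ∑ j, (if E i j then
        thetaA ρ i j • ((ω i j) •
          ((S i - S j) • ((ContinuousLinearMap.proj i : (Fin N → ℝ) →L[ℝ] ℝ) - ContinuousLinearMap.proj j)
          + (S i - S j) • ((ContinuousLinearMap.proj i : (Fin N → ℝ) →L[ℝ] ℝ) - ContinuousLinearMap.proj j)))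
        else (0 : (Fin N → ℝ) →L[ℝ] ℝ))) S :=
  ((((kin_hasFDerivAt E ω ρ S).add_const (β * fisherI E ωt ρ)).add_const
    (potV V ρ)).add_const (potW W ρ)).sub_const (α * entL ρ)

lemma H1s_fderiv {N : ℕ} (σ ρ : Fin N → ℝ) (S : Fin N → ℝ) :
    fderiv ℝ (fun s => H1 σ ρ s) S = 0 :=
  fderiv_const_apply _

lemma H1r_fderiv {N : ℕ} (σ : Fin N → ℝ) (S ρ : Fin N → ℝ) (k : Fin N) :
    (fderiv ℝ (fun r => H1 σ r S) ρ) (Pi.single k 1) = σ k := by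
  have h : HasFDerivAt (fun r : Fin N → ℝ => H1 σ r S)
      (∑ i, σ i • (ContinuousLinearMap.proj i : (Fin N → ℝ) →L[ℝ] ℝ)) ρ :=
    HasFDerivAt.fun_sum (fun i _ => (hasFDerivAt_apply i ρ).const_mul (σ i))
  rw [h.fderiv]
  simp [ContinuousLinearMap.sum_apply, Pi.single_apply]

/-- The key first-bracket identity, valid for every `ρ, S`. -/
lemma pb1_eq {N : ℕ} (E : Fin N → Fin N → Prop) [DecidableRel E]
    (ω ωt : Fin N → Fin N → ℝ) (β α : ℝ) (V : Fin N → ℝ) (W : Fin N → Fin N → ℝ)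
    (σ : Fin N → ℝ) (ρ S : Fin N → ℝ) :
    pbracket (H0 E ω ωt β α V W) (H1 σ) ρ S
      = - innerTheta E ω ρ (gradG E σ) (gradG E S) := by
  unfold pbracket
  simp only [H1s_fderiv, ContinuousLinearMap.zero_apply, mul_zero, zero_sub, H1r_fderiv]
  have e1 : ∑ i, -((fderiv ℝ (fun s => H0 E ω ωt β α V W ρ s) S) (Pi.single i 1) * σ i)
      = -(∑ i, σ i * (fderiv ℝ (fun s => H0 E ω ωt β α V W ρ s) S) (Pi.single i 1)) := by
    rw [← Finset.sum_neg_distrib]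
    exact Finset.sum_congr rfl (fun i _ => by ring)
  rw [e1, sum_single_fderiv (H0S_hasFDerivAt E ω ωt β α V W ρ S) σ,
    kinL_apply E ω ρ S σ, neg_inj]
  unfold innerTheta gradG
  congr 1
  apply Finset.sum_congr rfl; intro i _
  apply Finset.sum_congr rfl; intro j _
  by_cases h : E i j
  · simp only [if_pos h]; ring
  · simp [h]

end Aux


section Aux2

lemma pb2_eq {N : ℕ} (E : Fin N → Fin N → Prop) [DecidableRel E]
    (ω ωt : Fin N → Fin N → ℝ) (β α : ℝ) (V : Fin N → ℝ) (W : Fin N → Fin N → ℝ)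
    (σ : Fin N → ℝ) (ρ S : Fin N → ℝ) :
    pbracket (H1 σ) (pbracket (H0 E ω ωt β α V W) (H1 σ)) ρ S
      = - innerTheta E ω ρ (gradG E σ) (gradG E σ) := by
  -- the function `{H0,H1}` is an explicit function, linear in `s`
  have hfun : pbracket (H0 E ω ωt β α V W) (H1 σ)
      = (fun (r s : Fin N → ℝ) => (-(1/2) : ℝ) * ∑ i, ∑ j,
          (if E i j then ω i j * gradG E σ i j * (s i - s j) * thetaA r i j else 0)) := by
    funext r s
    rw [pb1_eq E ω ωt β α V W σ r s]
    unfold innerTheta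
    rw [← neg_mul]
    congr 1
    apply Finset.sum_congr rfl; intro i _
    apply Finset.sum_congr rfl; intro j _
    by_cases h : E i j
    · simp only [if_pos h]
      unfold gradG
      simp only [if_pos h]
    · simp [h]
  have hL : HasFDerivAt
      (fun s : Fin N → ℝ => (-(1/2) : ℝ) * ∑ i, ∑ j,
          (if E i j then ω i j * gradG E σ i j * (s i - s j) * thetaA ρ i j else 0))
      ((-(1/2) : ℝ) • ∑ i, ∑ j, (if E i j then
          thetaA ρ i j • ((ω i j * gradG E σ i j) •
            ((ContinuousLinearMap.proj i : (Fin N → ℝ) →L[ℝ] ℝ) - ContinuousLinearMap.proj j))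
          else (0 : (Fin N → ℝ) →L[ℝ] ℝ))) S := by
    have hterm : ∀ i j : Fin N,
        HasFDerivAt (fun s : Fin N → ℝ =>
            if E i j then ω i j * gradG E σ i j * (s i - s j) * thetaA ρ i j else 0)
          (if E i j then
            thetaA ρ i j • ((ω i j * gradG E σ i j) •
              ((ContinuousLinearMap.proj i : (Fin N → ℝ) →L[ℝ] ℝ) - ContinuousLinearMap.proj j))
            else (0 : (Fin N → ℝ) →L[ℝ] ℝ)) S := by
      intro i j
      by_cases h : E i j
      · simp only [if_pos h]
        exact ((((hasFDerivAt_apply i S).sub (hasFDerivAt_apply j S)).const_mul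
          (ω i j * gradG E σ i j)).mul_const (thetaA ρ i j))
      · simp only [if_neg h]
        exact hasFDerivAt_const 0 S
    exact (HasFDerivAt.fun_sum (fun i _ => HasFDerivAt.fun_sum (fun j _ => hterm i j))).const_mul
      (-(1/2) : ℝ)
  rw [hfun]
  unfold pbracket
  simp only [H1s_fderiv, ContinuousLinearMap.zero_apply, zero_mul, sub_zero, H1r_fderiv]
  rw [sum_single_fderiv hL σ]
  -- now evaluate the continuous linear map at σ
  have key : ∀ i j : Fin N,
      ((if E i j then
          thetaA ρ i j • ((ω i j * gradG E σ i j) •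
            ((ContinuousLinearMap.proj i : (Fin N → ℝ) →L[ℝ] ℝ) - ContinuousLinearMap.proj j))
          else (0 : (Fin N → ℝ) →L[ℝ] ℝ)) : (Fin N → ℝ) →L[ℝ] ℝ) σ
      = (if E i j then ω i j * gradG E σ i j * gradG E σ i j * thetaA ρ i j else 0) := by
    intro i j
    by_cases h : E i j
    · simp only [if_pos h, ContinuousLinearMap.smul_apply, ContinuousLinearMap.sub_apply,
        ContinuousLinearMap.proj_apply, smul_eq_mul]
      unfold gradG
      simp only [if_pos h]
      ring
    · simp [h]
  simp only [ContinuousLinearMap.smul_apply, ContinuousLinearMap.sum_apply, smul_eq_mul]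
  simp_rw [key]
  unfold innerTheta
  ring

end Aux2

set_option maxHeartbeats 2000000 in
/-- Explicit Poisson bracket identities `{H_0,H_1} = −⟨∇_G σ, ∇_G S⟩_{θ(ρ)}` and
`{H_1,{H_0,H_1}} = −⟨∇_G σ, ∇_G σ⟩_{θ(ρ)}` on `P_o(G) × ℝ^N`, together with the
sufficient condition `|{H_0,H_1}| + |{H_1,{H_0,H_1}}| ≤ c₁ H_0 + C₁` for global
well-posedness. -/
theorem poisson_bracket_identities_and_bound
    (N : ℕ) (hN : 2 ≤ N) (E : Fin N → Fin N → Prop) [DecidableRel E]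
    (hEsymm : ∀ i j, E i j ↔ E j i) (hEirr : ∀ i, ¬ E i i)
    (hconn : ∀ i j : Fin N, Relation.ReflTransGen (fun a b => E a b) i j)
    (ω ωt : Fin N → Fin N → ℝ)
    (hωsymm : ∀ i j, ω i j = ω j i) (hωpos : ∀ i j, E i j → 0 < ω i j)
    (hωtsymm : ∀ i j, ωt i j = ωt j i) (hωtpos : ∀ i j, E i j → 0 < ωt i j)
    (β : ℝ) (hβ : 0 < β) (α : ℝ)
    (V : Fin N → ℝ) (W : Fin N → Fin N → ℝ) (hWsymm : ∀ i j, W i j = W j i)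
    (σ : Fin N → ℝ) :
    (∀ ρ S : Fin N → ℝ, (∀ i, 0 < ρ i) → (∑ i, ρ i = 1) →
      pbracket (H0 E ω ωt β α V W) (H1 σ) ρ S
        = - innerTheta E ω ρ (gradG E σ) (gradG E S)) ∧
    (∀ ρ S : Fin N → ℝ, (∀ i, 0 < ρ i) → (∑ i, ρ i = 1) →
      pbracket (H1 σ) (pbracket (H0 E ω ωt β α V W) (H1 σ)) ρ S
        = - innerTheta E ω ρ (gradG E σ) (gradG E σ)) ∧
    (∃ c₁ C₁ : ℝ, 0 < c₁ ∧ 0 < C₁ ∧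
      ∀ ρ S : Fin N → ℝ, (∀ i, 0 < ρ i) → (∑ i, ρ i = 1) →
        |pbracket (H0 E ω ωt β α V W) (H1 σ) ρ S| +
          |pbracket (H1 σ) (pbracket (H0 E ω ωt β α V W) (H1 σ)) ρ S|
          ≤ c₁ * H0 E ω ωt β α V W ρ S + C₁) := by
  refine ⟨fun ρ S _ _ => pb1_eq E ω ωt β α V W σ ρ S,
    fun ρ S _ _ => pb2_eq E ω ωt β α V W σ ρ S, ?_⟩
  -- constants
  set A : ℝ := ∑ i, ∑ j, (if E i j then ω i j * (σ i - σ j) ^ 2 else 0) with hAdef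
  set CV : ℝ := ∑ i, |V i| with hCVdef
  set CW : ℝ := (1/2) * ∑ i, ∑ j, |W i j| with hCWdef
  set Cα : ℝ := |α| * (2 * (N : ℝ)) with hCadef
  have hA0 : 0 ≤ A := by
    refine Finset.sum_nonneg fun i _ => Finset.sum_nonneg fun j _ => ?_
    by_cases h : E i j
    · simp only [if_pos h]
      exact mul_nonneg (hωpos i j h).le (sq_nonneg _)
    · simp [h]
  have hCV0 : 0 ≤ CV := Finset.sum_nonneg fun i _ => abs_nonneg _
  have hCW0 : 0 ≤ CW := by
    have : (0:ℝ) ≤ ∑ i, ∑ j, |W i j| :=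
      Finset.sum_nonneg fun i _ => Finset.sum_nonneg fun j _ => abs_nonneg _
    rw [hCWdef]; linarith
  have hCa0 : 0 ≤ Cα := by
    have : (0:ℝ) ≤ (N:ℝ) := Nat.cast_nonneg N
    rw [hCadef]; positivity
  refine ⟨1, CV + CW + Cα + 2 * A + 1, one_pos, by linarith, ?_⟩
  intro ρ S hρ hs1
  rw [pb1_eq E ω ωt β α V W σ ρ S, pb2_eq E ω ωt β α V W σ ρ S, abs_neg, abs_neg]
  -- basic facts about ρ
  have hρle : ∀ i, ρ i ≤ 1 := by
    intro i
    rw [← hs1]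
    exact Finset.single_le_sum (fun j _ => (hρ j).le) (Finset.mem_univ i)
  have hθ0 : ∀ i j, 0 ≤ thetaA ρ i j := by
    intro i j
    have := (hρ i).le; have := (hρ j).le
    unfold thetaA; linarith
  have hθ1 : ∀ i j, thetaA ρ i j ≤ 1 := by
    intro i j
    have := hρle i; have := hρle j
    unfold thetaA; linarith
  -- the raw sums
  set T : ℝ := ∑ i, ∑ j,
      (if E i j then ω i j * gradG E σ i j * gradG E σ i j * thetaA ρ i j else 0) with hTdef
  set K4 : ℝ := ∑ i, ∑ j,
      (if E i j then ω i j * (S i - S j) ^ 2 * thetaA ρ i j else 0) with hK4def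
  have hTform : innerTheta E ω ρ (gradG E σ) (gradG E σ) = (1/2) * T := rfl
  have hKform : kinE E ω ρ S = (1/4) * K4 := rfl
  have hT0 : 0 ≤ T := by
    refine Finset.sum_nonneg fun i _ => Finset.sum_nonneg fun j _ => ?_
    by_cases h : E i j
    · simp only [if_pos h]
      unfold gradG
      simp only [if_pos h]
      nlinarith [mul_nonneg (mul_nonneg (hωpos i j h).le (sq_nonneg (σ i - σ j))) (hθ0 i j)]
    · simp [h]
  have hK40 : 0 ≤ K4 := by
    refine Finset.sum_nonneg fun i _ => Finset.sum_nonneg fun j _ => ?_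
    by_cases h : E i j
    · simp only [if_pos h]
      exact mul_nonneg (mul_nonneg (hωpos i j h).le (sq_nonneg _)) (hθ0 i j)
    · simp [h]
  have hTA : T ≤ A := by
    refine Finset.sum_le_sum fun i _ => Finset.sum_le_sum fun j _ => ?_
    by_cases h : E i j
    · simp only [if_pos h]
      unfold gradG
      simp only [if_pos h]
      nlinarith [mul_nonneg (hωpos i j h).le (sq_nonneg (σ i - σ j)), hθ1 i j, hθ0 i j]
    · simp [h]
  -- Cauchy–Schwarz / AM–GM bound on the cross term
  have hcross : |innerTheta E ω ρ (gradG E σ) (gradG E S)| ≤ (1/4) * T + (1/4) * K4 := by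
    have habs : |innerTheta E ω ρ (gradG E σ) (gradG E S)|
        ≤ (1/2) * ∑ i, ∑ j,
          |if E i j then ω i j * gradG E σ i j * gradG E S i j * thetaA ρ i j else 0| := by
      unfold innerTheta
      rw [abs_mul]
      have h1 : |∑ i, ∑ j, (if E i j then ω i j * gradG E σ i j * gradG E S i j * thetaA ρ i j else 0)|
          ≤ ∑ i, ∑ j, |if E i j then ω i j * gradG E σ i j * gradG E S i j * thetaA ρ i j else 0| := by
        refine (Finset.abs_sum_le_sum_abs _ _).trans ?_
        exact Finset.sum_le_sum fun i _ => Finset.abs_sum_le_sum_abs _ _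
      have h2 : |(1:ℝ)/2| = 1/2 := by norm_num
      rw [h2]
      linarith
    have hterm : ∀ i j : Fin N,
        |if E i j then ω i j * gradG E σ i j * gradG E S i j * thetaA ρ i j else 0|
        ≤ (1/2) * (if E i j then ω i j * gradG E σ i j * gradG E σ i j * thetaA ρ i j else 0)
          + (1/2) * (if E i j then ω i j * (S i - S j) ^ 2 * thetaA ρ i j else 0) := by
      intro i j
      by_cases h : E i j
      · simp only [if_pos h]
        unfold gradG
        simp only [if_pos h]
        have hw : 0 ≤ ω i j * thetaA ρ i j := mul_nonneg (hωpos i j h).le (hθ0 i j)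
        rw [abs_le]
        constructor
        · nlinarith [mul_nonneg hw (sq_nonneg (σ i - σ j + (S i - S j)))]
        · nlinarith [mul_nonneg hw (sq_nonneg (σ i - σ j - (S i - S j)))]
      · simp [h]
    have hsum : ∑ i, ∑ j, |if E i j then ω i j * gradG E σ i j * gradG E S i j * thetaA ρ i j else 0|
        ≤ (1/2) * T + (1/2) * K4 := by
      rw [hTdef, hK4def, Finset.mul_sum, Finset.mul_sum, ← Finset.sum_add_distrib]
      refine Finset.sum_le_sum fun i _ => ?_
      rw [Finset.mul_sum, Finset.mul_sum, ← Finset.sum_add_distrib]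
      exact Finset.sum_le_sum fun j _ => hterm i j
    calc |innerTheta E ω ρ (gradG E σ) (gradG E S)|
        ≤ (1/2) * ∑ i, ∑ j,
          |if E i j then ω i j * gradG E σ i j * gradG E S i j * thetaA ρ i j else 0| := habs
      _ ≤ (1/2) * ((1/2) * T + (1/2) * K4) := by linarith
      _ = (1/4) * T + (1/4) * K4 := by ring
  -- lower bound for H0
  have hfish : 0 ≤ fisherI E ωt ρ := by
    unfold fisherI
    have : (0:ℝ) ≤ ∑ i, ∑ j,
        (if E i j then ωt i j * (Real.log (ρ i) - Real.log (ρ j)) * (ρ i - ρ j) else 0) := by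
      refine Finset.sum_nonneg fun i _ => Finset.sum_nonneg fun j _ => ?_
      by_cases h : E i j
      · simp only [if_pos h]
        have hmono : 0 ≤ (Real.log (ρ i) - Real.log (ρ j)) * (ρ i - ρ j) := by
          rcases le_total (ρ i) (ρ j) with h' | h'
          · have := Real.log_le_log (hρ i) h'
            nlinarith
          · have := Real.log_le_log (hρ j) h'
            nlinarith
        rw [mul_assoc]
        exact mul_nonneg (hωtpos i j h).le hmono
      · simp [h]
    linarith
  have hVlb : -CV ≤ potV V ρ := by
    unfold potV
    rw [hCVdef, ← Finset.sum_neg_distrib]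
    refine Finset.sum_le_sum fun i _ => ?_
    nlinarith [neg_abs_le (V i), abs_nonneg (V i), hρ i, hρle i,
      mul_nonneg (by linarith [neg_abs_le (V i)] : (0:ℝ) ≤ V i + |V i|) (hρ i).le,
      mul_le_mul_of_nonneg_left (hρle i) (abs_nonneg (V i))]
  have hWlb : -CW ≤ potW W ρ := by
    unfold potW
    have hterm : ∀ i j : Fin N, -|W i j| ≤ W i j * ρ i * ρ j := by
      intro i j
      have hpp : 0 ≤ ρ i * ρ j := mul_nonneg (hρ i).le (hρ j).le
      have hpl : ρ i * ρ j ≤ 1 := by nlinarith [hρ i, hρ j, hρle i, hρle j]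
      nlinarith [neg_abs_le (W i j), abs_nonneg (W i j),
        mul_nonneg (by linarith [neg_abs_le (W i j)] : (0:ℝ) ≤ W i j + |W i j|) hpp,
        mul_le_mul_of_nonneg_left hpl (abs_nonneg (W i j))]
    have hsum : ∑ i, ∑ j, (-|W i j|) ≤ ∑ i, ∑ j, W i j * ρ i * ρ j :=
      Finset.sum_le_sum fun i _ => Finset.sum_le_sum fun j _ => hterm i j
    have hneg : ∑ i, ∑ j, (-|W i j|) = -∑ i, ∑ j, |W i j| := by
      simp [Finset.sum_neg_distrib]
    rw [hCWdef]
    rw [hneg] at hsum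
    linarith
  have hent : |entL ρ| ≤ 2 * (N : ℝ) := by
    unfold entL
    have hterm : ∀ i : Fin N, |ρ i * Real.log (ρ i) - ρ i| ≤ 2 := by
      intro i
      have hlog : Real.log (ρ i) ≤ 0 := Real.log_nonpos (hρ i).le (hρle i)
      have hup : ρ i * Real.log (ρ i) ≤ 0 := by nlinarith [hρ i]
      have h1 : Real.log ((ρ i)⁻¹) ≤ (ρ i)⁻¹ - 1 :=
        Real.log_le_sub_one_of_pos (inv_pos.mpr (hρ i))
      rw [Real.log_inv] at h1
      have hinv : ρ i * (ρ i)⁻¹ = 1 := mul_inv_cancel₀ (hρ i).ne'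
      have hlow : -1 ≤ ρ i * Real.log (ρ i) := by
        nlinarith [mul_le_mul_of_nonneg_left h1 (hρ i).le]
      rw [abs_le]
      constructor
      · linarith [hρle i]
      · linarith [hρ i]
    calc |∑ i, (ρ i * Real.log (ρ i) - ρ i)| ≤ ∑ i, |ρ i * Real.log (ρ i) - ρ i| :=
          Finset.abs_sum_le_sum_abs _ _
      _ ≤ ∑ _i : Fin N, (2:ℝ) := Finset.sum_le_sum fun i _ => hterm i
      _ = 2 * (N : ℝ) := by simp [Finset.sum_const, Finset.card_univ, mul_comm]
  have hαent : -Cα ≤ -(α * entL ρ) := by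
    have h1 : α * entL ρ ≤ |α * entL ρ| := le_abs_self _
    have h2 : |α * entL ρ| = |α| * |entL ρ| := abs_mul _ _
    have h3 : |α| * |entL ρ| ≤ |α| * (2 * (N:ℝ)) :=
      mul_le_mul_of_nonneg_left hent (abs_nonneg α)
    rw [hCadef]; linarith
  have hH0lb : kinE E ω ρ S ≤ H0 E ω ωt β α V W ρ S + CV + CW + Cα := by
    unfold H0
    have := mul_nonneg hβ.le hfish
    linarith
  -- final assembly
  have hQσ : |innerTheta E ω ρ (gradG E σ) (gradG E σ)| = (1/2) * T := by
    rw [hTform, abs_of_nonneg (by linarith)]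
  rw [hQσ]
  rw [hKform] at hH0lb
  linarith [hcross, hTA, hT0, hK40]


end
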